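/- arXiv:1305.1506 — 6 statements merged into one kernel-verified Lean document; each statement's English description precedes it below -/
import Mathlib

section
/- Let ψ be a permutation-symmetric state of n qudits (vector in the symmetric subspace of (ℂ^d)^{⊗n}) and let B be an invertible d×d complex matrix. Then (B ⊗ B^{-1} ⊗ I ⊗ ⋯ ⊗ I) ψ = ψ if and only if (B ⊗ I ⊗ ⋯ ⊗ I) ψ lies in the symmetric subspace. -/
open Matrix BigOperators Polynomial

/-- Permutation symmetry of an `n`-qudit state represented by its amplitudes. -/
def PSym {n d : ℕ} (ψ : (Fin n → Fin d) → ℂ) : Prop :=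
  ∀ σ : Equiv.Perm (Fin n), ∀ x : Fin n → Fin d, ψ (x ∘ σ) = ψ x

/-- The operator `B` acting on the `k`-th tensor factor (identity elsewhere). -/
noncomputable def appAt {n d : ℕ} (k : Fin n) (B : Matrix (Fin d) (Fin d) ℂ)
    (ψ : (Fin n → Fin d) → ℂ) : (Fin n → Fin d) → ℂ :=
  fun x => ∑ j : Fin d, B (x k) j * ψ (Function.update x k j)

/-- The operator `A 1 ⊗ A 2 ⊗ ⋯ ⊗ A n` acting on an `n`-qudit state. -/
noncomputable def appAll {n d : ℕ} (A : Fin n → Matrix (Fin d) (Fin d) ℂ)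
    (ψ : (Fin n → Fin d) → ℂ) : (Fin n → Fin d) → ℂ :=
  fun x => ∑ y : Fin n → Fin d, (∏ k, A k (x k) (y k)) * ψ y

lemma appAt_comp {n d : ℕ} (k : Fin n) (A B : Matrix (Fin d) (Fin d) ℂ)
    (ψ : (Fin n → Fin d) → ℂ) :
    appAt k A (appAt k B ψ) = appAt k (A * B) ψ := by
  funext x
  simp only [appAt, Function.update_self, Function.update_idem, Finset.mul_sum, Matrix.mul_apply]
  rw [Finset.sum_comm]
  refine Finset.sum_congr rfl fun i _ => ?_
  rw [Finset.sum_mul]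
  refine Finset.sum_congr rfl fun j _ => ?_
  ring

lemma appAt_comm {n d : ℕ} {k l : Fin n} (h : k ≠ l) (A B : Matrix (Fin d) (Fin d) ℂ)
    (ψ : (Fin n → Fin d) → ℂ) :
    appAt k A (appAt l B ψ) = appAt l B (appAt k A ψ) := by
  funext x
  simp only [appAt, Finset.mul_sum, Function.update_of_ne h, Function.update_of_ne h.symm]
  rw [Finset.sum_comm]
  refine Finset.sum_congr rfl fun i _ => ?_
  refine Finset.sum_congr rfl fun j _ => ?_
  rw [Function.update_comm h]
  ring

lemma appAt_one {n d : ℕ} (k : Fin n) (ψ : (Fin n → Fin d) → ℂ) :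
    appAt k (1 : Matrix (Fin d) (Fin d) ℂ) ψ = ψ := by
  funext x
  simp only [appAt, Matrix.one_apply]
  rw [Finset.sum_eq_single (x k)]
  · simp
  · intro b _ hb
    simp [hb.symm]
  · simp

lemma appAt_perm {n d : ℕ} {ψ : (Fin n → Fin d) → ℂ} (hψ : PSym ψ)
    (m : Fin n) (B : Matrix (Fin d) (Fin d) ℂ) (σ : Equiv.Perm (Fin n))
    (x : Fin n → Fin d) :
    appAt m B ψ (x ∘ σ) = appAt (σ m) B ψ x := by
  simp only [appAt, Function.comp_apply]
  refine Finset.sum_congr rfl fun j _ => ?_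
  congr 1
  have : Function.update (x ∘ σ) m j = (Function.update x (σ m) j) ∘ σ := by
    funext i
    by_cases hi : i = m
    · subst hi; simp
    · simp [Function.update_of_ne hi, Function.update_of_ne (fun hc => hi (σ.injective hc))]
  rw [this, hψ]

theorem stmt_0 {n d : ℕ} (hn : 2 ≤ n) (ψ : (Fin n → Fin d) → ℂ) (hψ : PSym ψ)
    (B : Matrix (Fin d) (Fin d) ℂ) (hB : IsUnit B.det) :
    appAt ⟨0, by omega⟩ B (appAt ⟨1, by omega⟩ B⁻¹ ψ) = ψ ↔
      PSym (appAt ⟨0, by omega⟩ B ψ) := by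
  set z : Fin n := ⟨0, by omega⟩ with hz
  set o : Fin n := ⟨1, by omega⟩ with ho
  have hzo : z ≠ o := by simp [hz, ho, Fin.ext_iff]
  have hBB : B * B⁻¹ = 1 := Matrix.mul_nonsing_inv B hB
  have hBB' : B⁻¹ * B = 1 := Matrix.nonsing_inv_mul B hB
  constructor
  · intro h
    -- first: appAt o B ψ = appAt z B ψ
    have h1 : appAt o B ψ = appAt z B ψ := by
      have := congrArg (appAt o B) h
      rw [appAt_comm hzo.symm, appAt_comp, hBB, appAt_one] at this
      exact this.symm
    -- now show PSym
    intro σ x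
    rw [show x ∘ σ = x ∘ σ from rfl, appAt_perm hψ z B σ x]
    by_cases h0 : σ z = z
    · rw [h0]
    · by_cases h01 : σ z = o
      · rw [h01, h1]
      · -- general k = σ z, use swap o (σ z)
        set k := σ z
        have hswap : Equiv.swap o k o = k := Equiv.swap_apply_left o k
        have hswap0 : Equiv.swap o k z = z :=
          Equiv.swap_apply_of_ne_of_ne hzo (fun hc => h0 hc.symm)
        have e1 : appAt k B ψ x = appAt o B ψ (x ∘ Equiv.swap o k) := by
          rw [appAt_perm hψ o B (Equiv.swap o k) x, hswap]
        rw [e1, h1, appAt_perm hψ z B (Equiv.swap o k) x, hswap0]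
  · intro h
    have h1 : appAt o B ψ = appAt z B ψ := by
      funext x
      have := h (Equiv.swap z o) x
      rw [appAt_perm hψ z B (Equiv.swap z o) x, Equiv.swap_apply_left] at this
      exact this
    rw [appAt_comm hzo, ← h1, appAt_comp, hBB', appAt_one]
end

section
/- Let n ≥ 3, ψ a permutation-symmetric state of n qudits, and X a matrix with X_{(1)}ψ ∈ S. Then for every natural number p, X^p_{(1)}ψ ∈ S; and if X is invertible, this holds for all integers p. -/
open Matrix BigOperators Polynomial

/-!
If `ψ` is symmetric, then `X₍₁₎ψ` is symmetric exactly when `X₍ₖ₎ψ` does not depend on the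
site `k`. Site-independence passes to powers: with a third site `m ∉ {k, l}`, single-site
operators on distinct sites commute, so
`X^{p+1}₍ₖ₎ψ = X^p₍ₖ₎X₍ₘ₎ψ = X₍ₘ₎X^p₍ₖ₎ψ = X₍ₘ₎X^p₍ₗ₎ψ = X^{p+1}₍ₗ₎ψ`.
For invertible `X` it passes to `X⁻¹`, since
`X⁻¹₍ₖ₎ψ = X⁻¹₍ₖ₎X⁻¹₍ₗ₎X₍ₗ₎ψ = X⁻¹₍ₗ₎X⁻¹₍ₖ₎X₍ₖ₎ψ = X⁻¹₍ₗ₎ψ`.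
-/

namespace appAt

variable {n d : ℕ}

lemma one_apply (k : Fin n) (ψ : (Fin n → Fin d) → ℂ) : appAt k 1 ψ = ψ := by
  funext x
  simp [appAt, Matrix.one_apply]

lemma mul_apply (k : Fin n) (A B : Matrix (Fin d) (Fin d) ℂ) (ψ : (Fin n → Fin d) → ℂ) :
    appAt k (A * B) ψ = appAt k A (appAt k B ψ) := by
  funext x
  simp only [appAt, Function.update_self, Function.update_idem, Matrix.mul_apply,
    Finset.sum_mul, Finset.mul_sum, mul_assoc]
  rw [Finset.sum_comm]

lemma comm {k l : Fin n} (h : k ≠ l) (A B : Matrix (Fin d) (Fin d) ℂ)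
    (ψ : (Fin n → Fin d) → ℂ) : appAt k A (appAt l B ψ) = appAt l B (appAt k A ψ) := by
  funext x
  simp only [appAt, Function.update_of_ne h.symm, Function.update_of_ne h, Finset.mul_sum]
  rw [Finset.sum_comm]
  refine Finset.sum_congr rfl fun j _ => Finset.sum_congr rfl fun i _ => ?_
  rw [Function.update_comm h]
  ring

lemma inv_mul_cancel_apply (k : Fin n) {B : Matrix (Fin d) (Fin d) ℂ} (hB : IsUnit B.det)
    (ψ : (Fin n → Fin d) → ℂ) : appAt k B⁻¹ (appAt k B ψ) = ψ := by
  rw [← mul_apply, Matrix.nonsing_inv_mul B hB, one_apply]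

lemma comp_perm {ψ : (Fin n → Fin d) → ℂ} (hψ : PSym ψ) (k : Fin n)
    (B : Matrix (Fin d) (Fin d) ℂ) (σ : Equiv.Perm (Fin n)) (x : Fin n → Fin d) :
    appAt k B ψ (x ∘ σ) = appAt (σ k) B ψ x := by
  refine Finset.sum_congr rfl fun j _ => ?_
  have hupd : Function.update (x ∘ σ) k j = Function.update x (σ k) j ∘ σ := by
    rw [Function.update_comp_equiv x σ (σ k) j, Equiv.symm_apply_apply]
  rw [hupd, hψ σ, Function.comp_apply]

end appAt

def SiteIndependent {n d : ℕ} (B : Matrix (Fin d) (Fin d) ℂ) (ψ : (Fin n → Fin d) → ℂ) :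
    Prop :=
  ∀ k l : Fin n, appAt k B ψ = appAt l B ψ

lemma psym_appAt_iff_siteIndependent {n d : ℕ} {ψ : (Fin n → Fin d) → ℂ} (hψ : PSym ψ)
    (k : Fin n) (B : Matrix (Fin d) (Fin d) ℂ) :
    PSym (appAt k B ψ) ↔ SiteIndependent B ψ := by
  constructor
  · intro hsym
    have hk : ∀ l, appAt l B ψ = appAt k B ψ := fun l => funext fun x => by
      rw [← Equiv.swap_apply_left k l, ← appAt.comp_perm hψ, hsym]
    exact fun l l' => (hk l).trans (hk l').symm
  · intro hB σ x
    rw [appAt.comp_perm hψ, hB]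

namespace SiteIndependent

variable {n d : ℕ} {B : Matrix (Fin d) (Fin d) ℂ} {ψ : (Fin n → Fin d) → ℂ}

lemma pow (hn : 2 < n) (hB : SiteIndependent B ψ) (p : ℕ) : SiteIndependent (B ^ p) ψ := by
  induction p with
  | zero => intro k l; simp only [pow_zero, appAt.one_apply]
  | succ p ih =>
    intro k l
    obtain ⟨m, hmk, hml⟩ := Fin.exists_ne_and_ne_of_two_lt k l hn
    calc appAt k (B ^ (p + 1)) ψ
        = appAt k (B ^ p) (appAt m B ψ) := by rw [pow_succ, appAt.mul_apply, hB k m]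
      _ = appAt m B (appAt l (B ^ p) ψ) := by rw [appAt.comm hmk.symm, ih k l]
      _ = appAt l (B ^ (p + 1)) ψ := by
        rw [← appAt.comm hml.symm, hB m l, ← appAt.mul_apply, pow_succ]

lemma inv (hB : IsUnit B.det) (h : SiteIndependent B ψ) : SiteIndependent B⁻¹ ψ := by
  intro k l
  rcases eq_or_ne k l with rfl | hkl
  · rfl
  calc appAt k B⁻¹ ψ
      = appAt k B⁻¹ (appAt l B⁻¹ (appAt l B ψ)) := by rw [appAt.inv_mul_cancel_apply l hB]
    _ = appAt l B⁻¹ (appAt k B⁻¹ (appAt k B ψ)) := by rw [appAt.comm hkl, h l k]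
    _ = appAt l B⁻¹ ψ := by rw [appAt.inv_mul_cancel_apply k hB]

lemma zpow (hn : 2 < n) (hB : IsUnit B.det) (h : SiteIndependent B ψ) (p : ℤ) :
    SiteIndependent (B ^ p) ψ := by
  obtain ⟨m, rfl | rfl⟩ := Int.eq_nat_or_neg p
  · rw [zpow_natCast]
    exact h.pow hn m
  · rw [Matrix.zpow_neg_natCast, ← Matrix.inv_pow']
    exact (h.inv hB).pow hn m

end SiteIndependent

theorem stmt_3 {n d : ℕ} (hn : 3 ≤ n) (ψ : (Fin n → Fin d) → ℂ) (hψ : PSym ψ)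
    (X : Matrix (Fin d) (Fin d) ℂ)
    (hX : PSym (appAt ⟨0, by omega⟩ X ψ)) :
    (∀ p : ℕ, PSym (appAt ⟨0, by omega⟩ (X ^ p) ψ)) ∧
      (IsUnit X.det → ∀ p : ℤ, PSym (appAt ⟨0, by omega⟩ (X ^ p) ψ)) := by
  have hsite := (psym_appAt_iff_siteIndependent hψ _ X).1 hX
  exact ⟨fun p => (psym_appAt_iff_siteIndependent hψ _ _).2 (hsite.pow hn p),
    fun hdet p => (psym_appAt_iff_siteIndependent hψ _ _).2 (hsite.zpow hn hdet p)⟩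
end

section
/- For every invertible d×d complex matrix X and every natural number n ≥ 1, there exists a polynomial f with complex coefficients such that S := f(X) satisfies S^n = X. -/
/-!
Choose, by Lagrange interpolation, a polynomial `g` taking at each eigenvalue `λ` of `X` some
`n`-th root of `λ`. Then `g ^ n - X` vanishes on the spectrum, so by Cayley–Hamilton
`g(X) ^ n - X` is nilpotent. In the commutative subalgebra generated by `X`, the polynomial
`Y ^ n - X` has invertible derivative at `g(X)`, since `X` is a unit and `n ≠ 0`, so Newton's
iteration corrects `g(X)` to an exact `n`-th root of `X`, which is still a polynomial in `X`.
-/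

open Matrix BigOperators Polynomial

theorem exists_pow_eq_of_isNilpotent_pow_sub {S : Type*} [CommRing S] {a y : S} {n : ℕ}
    (hn : IsUnit (n : S)) (ha : IsUnit a) (hy : IsNilpotent (y ^ n - a)) :
    ∃ z, IsNilpotent (y - z) ∧ z ^ n = a := by
  have hyn : IsUnit (y ^ n) := by
    simpa using hy.isUnit_add_left_of_commute ha (Commute.all _ _)
  have hderiv : IsUnit (aeval y (derivative (X ^ n - C a))) := by
    rw [derivative_sub, derivative_C, sub_zero, derivative_X_pow, map_mul, aeval_C, aeval_X_pow]
    exact hn.mul (isUnit_of_dvd_unit (pow_dvd_pow y (n.sub_le 1)) hyn)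
  obtain ⟨z, ⟨hz, hroot⟩, -⟩ :=
    existsUnique_nilpotent_sub_and_aeval_eq_zero (P := X ^ n - C a) (by simpa using hy) hderiv
  exact ⟨z, hz, by simpa [sub_eq_zero] using hroot⟩

theorem exists_aeval_pow_eq_of_isNilpotent {K A : Type*} [Field K] [Ring A] [Algebra K A]
    {x : A} (hi : IsIntegral K x) (hx : IsUnit x) {n : ℕ} (hn : (n : K) ≠ 0) {g : K[X]}
    (hg : IsNilpotent (aeval x (g ^ n - X))) : ∃ f : K[X], aeval x f ^ n = x := by
  let B := Algebra.adjoin K {x}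
  let xB : B := ⟨x, Algebra.self_mem_adjoin_singleton K x⟩
  have : Module.Finite K B := Algebra.finite_adjoin_simple_of_isIntegral hi
  -- `B` is finite-dimensional, hence Artinian, so its non-zero-divisors are units.
  have hxB : IsUnit xB := by
    refine IsArtinianRing.isUnit_of_isIntegral_of_nonZeroDivisor (R := K) (.of_finite K xB) ?_
    exact comap_nonZeroDivisors_le_of_injective (f := B.val) Subtype.val_injective
      hx.mem_nonZeroDivisors
  have hgB : IsNilpotent (aeval xB g ^ n - xB) := by
    rw [← IsNilpotent.map_iff (f := B.val) Subtype.val_injective]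
    simpa [aeval_subalgebra_coe] using hg
  obtain ⟨z, -, hz⟩ := exists_pow_eq_of_isNilpotent_pow_sub
    (by simpa using hn.isUnit.map (algebraMap K B)) hxB hgB
  have hz_range : (z : A) ∈ (aeval (R := K) x).range := by
    rw [← Algebra.adjoin_singleton_eq_range_aeval]
    exact z.2
  obtain ⟨f, hf⟩ := (AlgHom.mem_range _).mp hz_range
  exact ⟨f, by rw [hf, ← Subalgebra.coe_pow, hz]⟩

namespace Polynomial

variable {K : Type*} [Field K] [IsAlgClosed K]

theorem exists_pow_sub_X_isRoot (s : Finset K) {n : ℕ} (hn : n ≠ 0) :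
    ∃ g : K[X], ∀ a ∈ s, (g ^ n - X).IsRoot a := by
  classical
  choose root hroot using fun a : K => IsAlgClosed.exists_pow_nat_eq a (Nat.pos_of_ne_zero hn)
  refine ⟨Lagrange.interpolate s id root, fun a ha => ?_⟩
  have hg : eval a (Lagrange.interpolate s id root) = root a :=
    Lagrange.eval_interpolate_at_node root (Set.injOn_id (s : Set K)) ha
  rw [IsRoot, eval_sub, eval_pow, hg, hroot, eval_X, sub_self]

theorem dvd_pow_natDegree_of_isRoot_of_mem_roots {p q : K[X]} (hp : p ≠ 0)
    (h : ∀ a ∈ p.roots, q.IsRoot a) : p ∣ q ^ p.natDegree := by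
  have hsplit := C_leadingCoeff_mul_prod_multiset_X_sub_C
    (IsAlgClosed.card_roots_eq_natDegree (p := p))
  calc p ∣ (p.roots.map fun a => X - C a).prod := by
        conv_lhs => rw [← hsplit]
        exact (isUnit_C.mpr (leadingCoeff_ne_zero.mpr hp).isUnit).mul_left_dvd.mpr dvd_rfl
    _ ∣ (p.roots.map fun _ => q).prod :=
        Multiset.prod_dvd_prod_of_dvd _ _ fun a ha => dvd_iff_isRoot.mpr (h a ha)
    _ = q ^ p.natDegree := by simp [IsAlgClosed.card_roots_eq_natDegree]

end Polynomial

theorem stmt_6 {d : ℕ} (X : Matrix (Fin d) (Fin d) ℂ) (hX : IsUnit X.det)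
    (n : ℕ) (hn : 1 ≤ n) :
    ∃ f : Polynomial ℂ, (Polynomial.aeval X f) ^ n = X := by
  have hn0 : n ≠ 0 := Nat.one_le_iff_ne_zero.mp hn
  obtain ⟨g, hg⟩ := exists_pow_sub_X_isRoot X.charpoly.roots.toFinset hn0
  obtain ⟨c, hc⟩ := dvd_pow_natDegree_of_isRoot_of_mem_roots X.charpoly_monic.ne_zero
    (q := g ^ n - Polynomial.X) fun a ha => hg a (Multiset.mem_toFinset.mpr ha)
  have hnil : IsNilpotent (aeval X (g ^ n - Polynomial.X)) :=
    ⟨_, by rw [← map_pow, hc, map_mul, aeval_self_charpoly, zero_mul]⟩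
  exact exists_aeval_pow_eq_of_isNilpotent (.of_finite ℂ X) ((isUnit_iff_isUnit_det X).mpr hX)
    (Nat.cast_ne_zero.mpr hn0) hnil
end

section
/- If U is a unitary d×d complex matrix and n ≥ 1, then there exists a unitary matrix V which is a polynomial in U and satisfies V^n = U. -/
open Matrix BigOperators Polynomial

/-!
With the L2 operator norm, complex matrices form a C⋆-algebra, so a unitary `U` has a continuous
functional calculus. Choosing an `n`-th root `r z` of every `z : ℂ`, the element `V = cfc r U`
satisfies `V ^ n = cfc (r ^ n) U = U`, and it is unitary because `|r z| = 1` on the spectrum of `U`,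
which lies on the unit circle. Since the spectrum is finite, `r` agrees there with its Lagrange
interpolating polynomial `q`, whence `V = q(U)`.
-/

theorem exists_aeval_eq_cfc_of_finite_spectrum {R A : Type*} {p : A → Prop} [Field R]
    [StarRing R] [MetricSpace R] [IsTopologicalRing R] [ContinuousStar R] [TopologicalSpace A]
    [Ring A] [StarRing A] [Algebra R A] [ContinuousFunctionalCalculus R A p] (f : R → R) {a : A}
    (ha : p a) (hfin : (spectrum R a).Finite) :
    ∃ q : R[X], cfc f a = aeval a q := by
  classical
  refine ⟨Lagrange.interpolate hfin.toFinset id f, ?_⟩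
  rw [← cfc_polynomial _ a ha]
  refine cfc_congr fun x hx ↦ ?_
  exact (Lagrange.eval_interpolate_at_node f (Set.injOn_id _) (hfin.mem_toFinset.mpr hx)).symm

theorem norm_eq_one_of_pow_eq {𝕜 : Type*} [NormedDivisionRing 𝕜] {z w : 𝕜} {n : ℕ}
    (hn : n ≠ 0) (hzw : z ^ n = w) (hw : ‖w‖ = 1) : ‖z‖ = 1 := by
  rw [← pow_eq_one_iff_of_nonneg (norm_nonneg z) hn, ← norm_pow, hzw, hw]

theorem Unitary.exists_aeval_pow_eq_of_finite_spectrum {A : Type*} [CStarAlgebra A] {u : A}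
    (hu : u ∈ unitary A) (hfin : (spectrum ℂ u).Finite) {n : ℕ} (hn : n ≠ 0) :
    ∃ v ∈ unitary A, (∃ q : ℂ[X], v = aeval u q) ∧ v ^ n = u := by
  choose r hr using fun z : ℂ ↦ IsAlgClosed.exists_pow_nat_eq z (Nat.pos_of_ne_zero hn)
  have hcont : ContinuousOn r (spectrum ℂ u) := hfin.continuousOn r
  obtain ⟨q, hq⟩ := exists_aeval_eq_cfc_of_finite_spectrum r (isStarNormal_of_mem_unitary hu) hfin
  refine ⟨cfc r u, ?_, ⟨q, hq⟩, ?_⟩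
  · rw [cfc_unitary_iff r u]
    intro x hx
    have hrx : ‖r x‖ = 1 := norm_eq_one_of_pow_eq hn (hr x) (spectrum.norm_eq_one_of_unitary hu hx)
    rw [RCLike.star_def, Complex.conj_mul', hrx]
    simp
  · rw [← cfc_pow r n u, cfc_congr (fun x _ ↦ hr x), cfc_id' ℂ u]

theorem stmt_10 {d : ℕ} (U : Matrix (Fin d) (Fin d) ℂ)
    (hU : U ∈ Matrix.unitaryGroup (Fin d) ℂ) (n : ℕ) (hn : 1 ≤ n) :
    ∃ V : Matrix (Fin d) (Fin d) ℂ, V ∈ Matrix.unitaryGroup (Fin d) ℂ ∧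
      (∃ f : Polynomial ℂ, V = Polynomial.aeval U f) ∧ V ^ n = U := by
  open scoped Matrix.Norms.L2Operator in
  exact Unitary.exists_aeval_pow_eq_of_finite_spectrum hU U.finite_spectrum
    (Nat.one_le_iff_ne_zero.mp hn)
end

section
/- Let E_j = Σ_{i_1+⋯+i_n=j} |i_1⟩⋯|i_n⟩ be the n-qudit excitation states for 0 ≤ j ≤ d−1, and let K be the nilpotent Jordan block of size d. For any coefficients α_0,…,α_{d−1} with α_{d−1} ≠ 0, the single-particle operator T = Σ_{j=0}^{d−1} α_{d−1−j} K^j is invertible (its determinant equals α_{d−1}^d) and T_{(1)} E_{d−1} = Σ_{j=0}^{d−1} α_j E_j. -/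
open Matrix BigOperators Polynomial

/-- The nilpotent Jordan block `K = Σ_{i=1}^{d-1} |i-1⟩⟨i|`. -/
noncomputable def Kblock (d : ℕ) : Matrix (Fin d) (Fin d) ℂ :=
  Matrix.of fun a b => if (a : ℕ) + 1 = (b : ℕ) then 1 else 0

/-- The unnormalized excitation state `E_j = Σ_{i_1+⋯+i_n=j} |i_1⟩⋯|i_n⟩`. -/
noncomputable def Estate (n d : ℕ) (j : ℕ) : (Fin n → Fin d) → ℂ :=
  fun x => if (∑ k, (x k : ℕ)) = j then 1 else 0

/-!
`T` is an upper triangular Toeplitz matrix whose diagonal is constantly `α_{d-1}`, hence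
`det T = α_{d-1}^d`. In amplitudes, `(K^j_{(1)} ψ)(x) = ψ(x_1 + j, x_2, …, x_n)` when
`x_1 + j < d` and `0` otherwise; for `ψ = E_m` with `j ≤ m < d` the bound `x_1 + j < d` is
automatic once `x_1 + ⋯ + x_n = m - j`, so `K^j_{(1)} E_m = E_{m-j}`. By linearity
`T_{(1)} E_{d-1} = Σ_j α_{d-1-j} E_{d-1-j}`, which is the claim after reindexing by `j ↦ d-1-j`.
-/

lemma Fin.sum_ite_val_eq {M : Type*} [AddCommMonoid M] {d : ℕ} (m : ℕ) (f : Fin d → M) :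
    (∑ c : Fin d, if (c : ℕ) = m then f c else 0) = if h : m < d then f ⟨m, h⟩ else 0 := by
  split_ifs with h
  · rw [Finset.sum_eq_single_of_mem ⟨m, h⟩ (Finset.mem_univ _) fun c _ hc =>
      if_neg fun hcm => hc (Fin.ext hcm)]
    simp
  · exact Finset.sum_eq_zero fun c _ => if_neg (by omega)

lemma Kblock_pow_apply (d j : ℕ) (a b : Fin d) :
    (Kblock d ^ j) a b = if (a : ℕ) + j = b then 1 else 0 := by
  induction j generalizing a with
  | zero => simp [Matrix.one_apply, Fin.ext_iff]
  | succ j ih =>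
    rw [pow_succ', Matrix.mul_apply]
    simp only [ih]
    simp only [Kblock, Matrix.of_apply, ite_mul, one_mul, zero_mul, eq_comm (a := (a : ℕ) + 1),
      Fin.sum_ite_val_eq]
    have := b.isLt
    split_ifs <;> first | rfl | omega

lemma sum_smul_Kblock_pow_apply {d : ℕ} (c : Fin d → ℂ) (a b : Fin d) :
    (∑ j : Fin d, c j • Kblock d ^ (j : ℕ)) a b =
      if h : (a : ℕ) ≤ b then c ⟨b - a, by omega⟩ else 0 := by
  simp only [Matrix.sum_apply, Matrix.smul_apply, Kblock_pow_apply, smul_eq_mul, mul_ite,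
    mul_one, mul_zero]
  split_ifs with h
  · have hcond : ∀ x : Fin d, ((a : ℕ) + x = b ↔ (x : ℕ) = b - a) := fun x => by omega
    simp only [hcond, Fin.sum_ite_val_eq, dif_pos (show (b : ℕ) - a < d by omega)]
  · exact Finset.sum_eq_zero fun x _ => if_neg (by omega)

lemma isUpperTriangular_sum_smul_Kblock_pow {d : ℕ} (c : Fin d → ℂ) :
    (∑ j : Fin d, c j • Kblock d ^ (j : ℕ)).IsUpperTriangular := fun a b hba =>
  (sum_smul_Kblock_pow_apply c a b).trans (dif_neg (not_le.mpr hba))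

lemma det_sum_smul_Kblock_pow {d : ℕ} (hd : 0 < d) (c : Fin d → ℂ) :
    (∑ j : Fin d, c j • Kblock d ^ (j : ℕ)).det = c ⟨0, hd⟩ ^ d := by
  rw [Matrix.det_of_isUpperTriangular (isUpperTriangular_sum_smul_Kblock_pow c)]
  calc ∏ a : Fin d, (∑ j : Fin d, c j • Kblock d ^ (j : ℕ)) a a = ∏ _a : Fin d, c ⟨0, hd⟩ :=
        Finset.prod_congr rfl fun a _ => by simp [sum_smul_Kblock_pow_apply]
    _ = c ⟨0, hd⟩ ^ d := by simp

lemma appAt_sum_smul {n d : ℕ} {ι : Type*} (k : Fin n) (s : Finset ι) (c : ι → ℂ)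
    (B : ι → Matrix (Fin d) (Fin d) ℂ) (ψ : (Fin n → Fin d) → ℂ) :
    appAt k (∑ i ∈ s, c i • B i) ψ = ∑ i ∈ s, c i • appAt k (B i) ψ := by
  funext x
  simp only [appAt, Matrix.sum_apply, Matrix.smul_apply, Finset.sum_apply, Pi.smul_apply,
    smul_eq_mul, Finset.sum_mul, Finset.mul_sum, mul_assoc]
  exact Finset.sum_comm

lemma appAt_Kblock_pow_apply {n d : ℕ} (k : Fin n) (j : ℕ) (ψ : (Fin n → Fin d) → ℂ)
    (x : Fin n → Fin d) :
    appAt k (Kblock d ^ j) ψ x =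
      if h : (x k : ℕ) + j < d then ψ (Function.update x k ⟨x k + j, h⟩) else 0 := by
  simp only [appAt, Kblock_pow_apply, ite_mul, one_mul, zero_mul, eq_comm (a := (x k : ℕ) + j),
    Fin.sum_ite_val_eq]

lemma sum_val_update_add {n d : ℕ} (x : Fin n → Fin d) (k : Fin n) (b : Fin d) :
    ∑ i, ((Function.update x k b i : Fin d) : ℕ) + x k = ∑ i, (x i : ℕ) + b := by
  simp only [Function.apply_update (fun _ (y : Fin d) => (y : ℕ)),
    Finset.sum_update_of_mem (Finset.mem_univ k)]
  rw [← Finset.sum_sdiff (Finset.subset_univ {k}), Finset.sum_singleton]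
  ring

lemma appAt_Kblock_pow_Estate {n d : ℕ} (k : Fin n) {j m : ℕ} (hm : m < d) (hj : j ≤ m) :
    appAt k (Kblock d ^ j) (Estate n d m) = Estate n d (m - j) := by
  funext x
  have hk : (x k : ℕ) ≤ ∑ i, (x i : ℕ) :=
    Finset.single_le_sum (f := fun i => (x i : ℕ)) (fun i _ => Nat.zero_le _) (Finset.mem_univ k)
  rw [appAt_Kblock_pow_apply]
  split_ifs with h
  · have := sum_val_update_add x k ⟨x k + j, h⟩
    dsimp only at this
    simp only [Estate]
    split_ifs <;> first | rfl | omega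
  · simp only [Estate]
    rw [if_neg (by omega)]

theorem stmt_15 {n d : ℕ} (hn : 0 < n) (hd : 0 < d) (α : Fin d → ℂ)
    (hα : α ⟨d - 1, Nat.sub_lt hd one_pos⟩ ≠ 0) :
    (∑ j : Fin d, α j.rev • (Kblock d) ^ (j : ℕ)).det =
        (α ⟨d - 1, Nat.sub_lt hd one_pos⟩) ^ d ∧
      IsUnit (∑ j : Fin d, α j.rev • (Kblock d) ^ (j : ℕ)).det ∧
      appAt ⟨0, hn⟩ (∑ j : Fin d, α j.rev • (Kblock d) ^ (j : ℕ))
          (Estate n d (d - 1)) =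
        fun x => ∑ j : Fin d, α j * Estate n d (j : ℕ) x := by
  have hdet : (∑ j : Fin d, α j.rev • (Kblock d) ^ (j : ℕ)).det =
      (α ⟨d - 1, Nat.sub_lt hd one_pos⟩) ^ d :=
    det_sum_smul_Kblock_pow hd (fun j => α j.rev)
  refine ⟨hdet, hdet ▸ (pow_ne_zero d hα).isUnit, ?_⟩
  have hE : ∀ j : Fin d, appAt ⟨0, hn⟩ (Kblock d ^ (j : ℕ)) (Estate n d (d - 1)) =
      Estate n d j.rev := fun j => by
    rw [appAt_Kblock_pow_Estate _ (Nat.sub_lt hd one_pos) (by omega), Fin.val_rev]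
    congr 1
    omega
  rw [appAt_sum_smul, Finset.sum_congr rfl fun j _ => by rw [hE j]]
  funext x
  rw [Finset.sum_apply, ← Equiv.sum_comp Fin.revPerm]
  simp
end

section
/- Let ψ be a permutation-symmetric state of n qudits stabilized by an invertible matrix B (meaning B_{(1)}ψ ∈ S), and let V_1,…,V_p be the generalized eigenspaces of B for its distinct eigenvalues. Then ψ ∈ ⊕_{i=1}^p Sym^n(V_i); that is, ψ contains no term mixing vectors from generalized eigenspaces of different eigenvalues. -/
/-!
Bezout for the pairwise coprime polynomials `(X - μ) ^ d`, `μ` running over the eigenvalues of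
`B`, gives polynomials `P μ` in `B` with `∑ μ, P μ = 1`, `(B - μ) ^ d * P μ = 0` and
`P μ * P ν = 0` for `μ ≠ ν` (Cayley–Hamilton makes `∏ μ, (X - μ) ^ d` vanish at `B`).
Expanding `ψ = (⨂ k, ∑ μ, P μ) ψ` writes `ψ` as a sum of components
`(P (t 1) ⊗ ⋯ ⊗ P (t n)) ψ`. Symmetry of `ψ` and of `B_(1) ψ` gives `B_(j) ψ = B_(k) ψ`, hence
`p(B)_(j) ψ = p(B)_(k) ψ` for every polynomial `p`, because `B_(j)` and `B_(k)` commute. So if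
`t j ≠ t k` the component factors through `P(t j)_(j) P(t k)_(k) ψ = (P (t j) * P (t k))_(j) ψ = 0`,
and the components with constant `t = μ` are combinations of products of columns of `P μ`, which
lie in `ker (B - μ) ^ d`.
-/

open Matrix BigOperators Polynomial

open Finset

namespace Matrix

variable {κ ι R : Type*} [Fintype κ] [CommSemiring R]

def piKronecker (A : κ → Matrix ι ι R) : Matrix (κ → ι) (κ → ι) R :=
  of fun x y => ∏ k, A k (x k) (y k)

@[simp]
lemma piKronecker_apply (A : κ → Matrix ι ι R) (x y : κ → ι) :
    piKronecker A x y = ∏ k, A k (x k) (y k) := rfl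

lemma piKronecker_one [DecidableEq ι] : piKronecker (1 : κ → Matrix ι ι R) = 1 := by
  ext x y
  simp only [piKronecker_apply, Pi.one_apply, one_apply, prod_boole, mem_univ, true_implies]
  congr 1
  exact propext funext_iff.symm

variable [DecidableEq κ]

lemma sum_piKronecker_piFinset {α : Type*} (s : Finset α) (P : α → Matrix ι ι R) :
    ∑ t ∈ Fintype.piFinset fun _ : κ => s, piKronecker (fun k => P (t k)) =
      piKronecker fun _ => ∑ μ ∈ s, P μ := by
  ext x y
  simp only [sum_apply, piKronecker_apply]
  exact sum_prod_piFinset s fun k μ => P μ (x k) (y k)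

lemma piKronecker_mulSingle_apply [DecidableEq ι] (k : κ) (M : Matrix ι ι R) (x y : κ → ι) :
    piKronecker (Pi.mulSingle k M) x y =
      M (x k) (y k) * ∏ l ∈ {k}ᶜ, (1 : Matrix ι ι R) (x l) (y l) := by
  rw [piKronecker_apply, Fintype.prod_eq_mul_prod_compl k, Pi.mulSingle_eq_same]
  congr 1
  refine prod_congr rfl fun l hl => ?_
  rw [Pi.mulSingle_eq_of_ne (by simpa using hl)]

variable [Fintype ι]

lemma piKronecker_mulVec (A : κ → Matrix ι ι R) (ψ : (κ → ι) → R) :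
    piKronecker A *ᵥ ψ = ∑ y, ψ y • fun x => ∏ k, A k (x k) (y k) := by
  ext x
  simp [mulVec, dotProduct, mul_comm]

lemma piKronecker_mul (A A' : κ → Matrix ι ι R) :
    piKronecker (A * A') = piKronecker A * piKronecker A' := by
  ext x z
  simp only [piKronecker_apply, Pi.mul_apply, mul_apply, ← prod_mul_distrib]
  exact (sum_prod_piFinset _ _).symm

variable [DecidableEq ι]

def piKroneckerHom : (κ → Matrix ι ι R) →* Matrix (κ → ι) (κ → ι) R where
  toFun := piKronecker
  map_one' := piKronecker_one
  map_mul' := piKronecker_mul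

/-- `M` acting on the `k`-th tensor factor, the paper's `M_(k)`. -/
def piKroneckerSlot (k : κ) : Matrix ι ι R →ₐ[R] Matrix (κ → ι) (κ → ι) R :=
  AlgHom.ofLinearMap
    { toFun := fun M => piKronecker (Pi.mulSingle k M)
      map_add' := fun M N => by
        ext x y
        simp only [piKronecker_mulSingle_apply, add_apply, add_mul]
      map_smul' := fun r M => by
        ext x y
        simp only [piKronecker_mulSingle_apply, smul_apply, smul_eq_mul, mul_assoc,
          RingHom.id_apply] }
    (by simp [piKronecker_one])
    (fun M N => by
      simp only [LinearMap.coe_mk, AddHom.coe_mk]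
      rw [Pi.mulSingle_mul, piKronecker_mul])

lemma piKroneckerSlot_apply (k : κ) (M : Matrix ι ι R) :
    piKroneckerSlot k M = piKronecker (Pi.mulSingle k M) := rfl

lemma piKroneckerSlot_commute {j k : κ} (hjk : j ≠ k) (M N : Matrix ι ι R) :
    Commute (piKroneckerSlot j M) (piKroneckerSlot k N) := by
  rw [piKroneckerSlot_apply, piKroneckerSlot_apply]
  exact (Pi.mulSingle_commute hjk M N).map piKroneckerHom

lemma piKronecker_eq_mul_piKroneckerSlot (A : κ → Matrix ι ι R) (k : κ) :
    piKronecker A = piKronecker (Function.update A k 1) * piKroneckerSlot k (A k) := by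
  rw [piKroneckerSlot_apply, ← piKronecker_mul]
  congr 1
  ext1 l
  rcases eq_or_ne l k with rfl | hl
  · simp
  · simp [hl]

lemma piKroneckerSlot_mulVec (k : κ) (M : Matrix ι ι R) (ψ : (κ → ι) → R) :
    piKroneckerSlot k M *ᵥ ψ = fun x => ∑ j, M (x k) j * ψ (Function.update x k j) := by
  ext x
  refine (Fintype.sum_of_injective (Function.update x k) (Function.update_injective x k) _ _
    (fun y hy => ?_) (fun j => ?_)).symm
  · dsimp only
    obtain ⟨l, hlk, hl⟩ : ∃ l ≠ k, x l ≠ y l := by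
      contrapose! hy
      exact ⟨y k, funext fun l => by rcases eq_or_ne l k with rfl | h <;> simp [*]⟩
    rw [piKroneckerSlot_apply, piKronecker_mulSingle_apply,
      prod_eq_zero (i := l) (by simpa using hlk) (by simp [hl]), mul_zero, zero_mul]
  · dsimp only
    rw [piKroneckerSlot_apply, piKronecker_mulSingle_apply, prod_eq_one, mul_one,
      Function.update_self]
    intro l hl
    rw [Function.update_of_ne (by simpa using hl), one_apply_eq]

lemma piKronecker_const_mulVec_mem_span {M N : Matrix ι ι R} (hNM : N * M = 0)
    (ψ : (κ → ι) → R) :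
    piKronecker (fun _ => M) *ᵥ ψ ∈ Submodule.span R
      {φ | ∃ v : κ → ι → R, (∀ k, N *ᵥ v k = 0) ∧ φ = fun x => ∏ k, v k (x k)} := by
  rw [piKronecker_mulVec]
  refine Submodule.sum_mem _ fun y _ => Submodule.smul_mem _ _ (Submodule.subset_span ?_)
  refine ⟨fun k => M *ᵥ Pi.single (y k) 1, fun k => ?_, by simp⟩
  rw [mulVec_mulVec, hNM, zero_mulVec]

lemma aeval_mulVec_eq_of_commute {S T : Matrix ι ι R} (hST : Commute S T) {v : ι → R}
    (hv : S *ᵥ v = T *ᵥ v) (p : R[X]) : aeval S p *ᵥ v = aeval T p *ᵥ v := by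
  have hpow : ∀ i : ℕ, S ^ i *ᵥ v = T ^ i *ᵥ v := by
    intro i
    induction i with
    | zero => rfl
    | succ i ih =>
      rw [pow_succ, ← mulVec_mulVec, hv, mulVec_mulVec, (hST.pow_left i).eq, ← mulVec_mulVec, ih,
        mulVec_mulVec, ← pow_succ']
  simp only [aeval_eq_sum_range, sum_mulVec, smul_mulVec, hpow]

lemma piKroneckerSlot_aeval_mulVec_eq {B : Matrix ι ι R} {ψ : (κ → ι) → R} {j k : κ}
    (hjk : j ≠ k) (hB : piKroneckerSlot j B *ᵥ ψ = piKroneckerSlot k B *ᵥ ψ) (p : R[X]) :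
    piKroneckerSlot j (aeval B p) *ᵥ ψ = piKroneckerSlot k (aeval B p) *ᵥ ψ := by
  rw [← aeval_algHom_apply, ← aeval_algHom_apply]
  exact aeval_mulVec_eq_of_commute (piKroneckerSlot_commute hjk B B) hB p

lemma piKronecker_mulVec_eq_zero {A : κ → Matrix ι ι R} {ψ : (κ → ι) → R} {j k : κ} (hjk : j ≠ k)
    (hA : A j * A k = 0) (hψ : piKroneckerSlot k (A k) *ᵥ ψ = piKroneckerSlot j (A k) *ᵥ ψ) :
    piKronecker A *ᵥ ψ = 0 := by
  rw [piKronecker_eq_mul_piKroneckerSlot A k, piKronecker_eq_mul_piKroneckerSlot _ j,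
    Function.update_of_ne hjk, ← mulVec_mulVec, hψ, mulVec_mulVec, mul_assoc, ← map_mul, hA,
    map_zero, mul_zero, zero_mulVec]

end Matrix

lemma exists_partition_of_unity_mod_prod_of_pairwise_coprime {R ι : Type*} [CommRing R]
    [DecidableEq ι] {s : Finset ι} {f : ι → R}
    (hf : (s : Set ι).Pairwise (Function.onFun IsCoprime f)) :
    ∃ q : ι → R, (∏ i ∈ s, f i ∣ ∑ i ∈ s, q i - 1) ∧ (∀ i ∈ s, ∏ l ∈ s, f l ∣ f i * q i) ∧
      ∀ i ∈ s, ∀ j ∈ s, i ≠ j → ∏ l ∈ s, f l ∣ q i * q j := by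
  rcases s.eq_empty_or_nonempty with rfl | hs
  · exact ⟨0, by simp, by simp, by simp⟩
  obtain ⟨c, hc⟩ := (exists_sum_eq_one_iff_pairwise_coprime hs).2
    ((pairwise_subtype_iff_pairwise_finset' _ _).2 hf)
  refine ⟨fun i => c i * ∏ l ∈ s \ {i}, f l, by rw [hc, sub_self]; exact dvd_zero _,
    fun i hi => ?_, fun i _ j hj hij => ?_⟩
  · rw [mul_left_comm, ← prod_eq_mul_prod_sdiff_singleton_of_mem hi]
    exact dvd_mul_left _ _
  · rw [prod_eq_mul_prod_sdiff_singleton_of_mem hj]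
    have hfj : f j ∣ ∏ l ∈ s \ {i}, f l := dvd_prod_of_mem f (by simp [hj, hij.symm])
    exact mul_dvd_mul (hfj.mul_left _) (dvd_mul_left _ _)

namespace Matrix

variable {ι K : Type*} [Fintype ι] [DecidableEq ι] [Field K] [IsAlgClosed K] [DecidableEq K]

lemma charpoly_dvd_prod_X_sub_C_pow (B : Matrix ι ι K) :
    B.charpoly ∣ ∏ μ ∈ B.charpoly.roots.toFinset, (X - C μ) ^ Fintype.card ι := by
  conv_lhs => rw [← prod_multiset_X_sub_C_of_monic_of_roots_card_eq B.charpoly_monic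
    IsAlgClosed.card_roots_eq_natDegree, Finset.prod_multiset_map_count]
  refine prod_dvd_prod_of_dvd _ _ fun μ _ => pow_dvd_pow _ ?_
  calc B.charpoly.roots.count μ ≤ Multiset.card B.charpoly.roots := Multiset.count_le_card _ _
    _ = B.charpoly.natDegree := IsAlgClosed.card_roots_eq_natDegree
    _ = Fintype.card ι := charpoly_natDegree_eq_dim B

lemma exists_spectral_projections (B : Matrix ι ι K) :
    ∃ (s : Finset K) (P : K → Matrix ι ι K), (∀ μ ∈ s, μ ∈ spectrum K B) ∧ ∑ μ ∈ s, P μ = 1 ∧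
      (∀ μ ∈ s, (B - μ • 1) ^ Fintype.card ι * P μ = 0) ∧
      (∀ μ ∈ s, ∀ ν ∈ s, μ ≠ ν → P μ * P ν = 0) ∧ ∀ μ, ∃ p : K[X], P μ = aeval B p := by
  set s := B.charpoly.roots.toFinset
  have hann : aeval B (∏ μ ∈ s, (X - C μ) ^ Fintype.card ι) = 0 :=
    aeval_eq_zero_of_dvd_aeval_eq_zero B.charpoly_dvd_prod_X_sub_C_pow (aeval_self_charpoly B)
  have hzero {p : K[X]} (hp : ∏ μ ∈ s, (X - C μ) ^ Fintype.card ι ∣ p) : aeval B p = 0 :=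
    aeval_eq_zero_of_dvd_aeval_eq_zero hp hann
  obtain ⟨q, hsum, hkill, horth⟩ := exists_partition_of_unity_mod_prod_of_pairwise_coprime
    (s := s) (f := fun μ => (X - C μ) ^ Fintype.card ι)
    fun μ _ ν _ h => (isCoprime_X_sub_C_of_isUnit_sub (sub_ne_zero.2 h).isUnit).pow
  refine ⟨s, fun μ => aeval B (q μ), fun μ hμ => mem_spectrum_of_isRoot_charpoly ?_, ?_,
    fun μ hμ => ?_, fun μ hμ ν hν h => ?_, fun μ => ⟨q μ, rfl⟩⟩
  · exact (mem_roots'.1 (Multiset.mem_toFinset.1 hμ)).2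
  · rw [← map_sum, ← sub_eq_zero, ← map_one (aeval (R := K) B), ← map_sub]
    exact hzero hsum
  · have hpow : (B - μ • 1) ^ Fintype.card ι = aeval B ((X - C μ) ^ Fintype.card ι) := by
      simp [Algebra.algebraMap_eq_smul_one]
    rw [hpow, ← map_mul]
    exact hzero (hkill μ hμ)
  · rw [← map_mul]
    exact hzero (horth μ hμ ν hν h)

end Matrix

open Matrix

section Qudits

variable {n d : ℕ}

lemma appAt_eq_piKroneckerSlot_mulVec (k : Fin n) (M : Matrix (Fin d) (Fin d) ℂ)
    (ψ : (Fin n → Fin d) → ℂ) : appAt k M ψ = piKroneckerSlot k M *ᵥ ψ :=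
  (piKroneckerSlot_mulVec k M ψ).symm

lemma appAt_comp_perm {ψ : (Fin n → Fin d) → ℂ} (hψ : PSym ψ) (k : Fin n)
    (M : Matrix (Fin d) (Fin d) ℂ) (σ : Equiv.Perm (Fin n)) (x : Fin n → Fin d) :
    appAt k M ψ (x ∘ σ) = appAt (σ k) M ψ x := by
  refine sum_congr rfl fun j _ => ?_
  rw [Function.comp_apply, ← Function.update_comp_eq_of_injective x σ.injective, hψ]

lemma appAt_eq_of_PSym {ψ : (Fin n → Fin d) → ℂ} (hψ : PSym ψ) {M : Matrix (Fin d) (Fin d) ℂ}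
    {k₀ : Fin n} (hM : PSym (appAt k₀ M ψ)) (k : Fin n) : appAt k M ψ = appAt k₀ M ψ := by
  ext x
  rw [← hM (Equiv.swap k₀ k) x, appAt_comp_perm hψ, Equiv.swap_apply_left]

end Qudits

theorem stmt_17 {n d : ℕ} (hn : 1 ≤ n) (ψ : (Fin n → Fin d) → ℂ) (hψ : PSym ψ)
    (B : Matrix (Fin d) (Fin d) ℂ)
    (hstab : PSym (appAt ⟨0, by omega⟩ B ψ)) :
    ψ ∈ Submodule.span ℂ
      {φ : (Fin n → Fin d) → ℂ |
        ∃ μ ∈ spectrum ℂ B, ∃ v : Fin n → (Fin d → ℂ),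
          (∀ k, ((B - μ • (1 : Matrix (Fin d) (Fin d) ℂ)) ^ d) *ᵥ v k = 0) ∧
            φ = fun x => ∏ k, v k (x k)} := by
  obtain ⟨s, P, hspec, hsum, hkill, horth, hpoly⟩ := B.exists_spectral_projections
  rw [Fintype.card_fin] at hkill
  have hslot (j k : Fin n) : piKroneckerSlot j B *ᵥ ψ = piKroneckerSlot k B *ᵥ ψ := by
    simp only [← appAt_eq_piKroneckerSlot_mulVec, appAt_eq_of_PSym hψ hstab]
  have hdecomp : ψ = ∑ t ∈ Fintype.piFinset fun _ => s, piKronecker (fun k => P (t k)) *ᵥ ψ := by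
    rw [← sum_mulVec, sum_piKronecker_piFinset, hsum, ← Pi.one_def, piKronecker_one, one_mulVec]
  rw [hdecomp]
  refine Submodule.sum_mem _ fun t ht => ?_
  rw [Fintype.mem_piFinset] at ht
  set k₀ : Fin n := ⟨0, by omega⟩
  by_cases hconst : ∀ k, t k = t k₀
  · rw [show (fun k => P (t k)) = fun _ => P (t k₀) from funext fun k => by rw [hconst k]]
    refine Submodule.span_mono ?_ (piKronecker_const_mulVec_mem_span (hkill _ (ht k₀)) ψ)
    rintro φ ⟨v, hv, rfl⟩
    exact ⟨t k₀, hspec _ (ht k₀), v, hv, rfl⟩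
  · obtain ⟨k, hk⟩ := not_forall.1 hconst
    obtain ⟨p, hp⟩ := hpoly (t k₀)
    have hk₀ : k₀ ≠ k := ne_of_apply_ne t (Ne.symm hk)
    rw [piKronecker_mulVec_eq_zero hk₀.symm (horth _ (ht k) _ (ht k₀) hk)
      (hp ▸ piKroneckerSlot_aeval_mulVec_eq hk₀ (hslot _ _) p)]
    exact Submodule.zero_mem _
end
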